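/- arXiv:2110.08293 — 4 statements merged into one kernel-verified Lean document; each statement's English description precedes it below -/
import Mathlib

section
/- Let M_0,...,M_{m−1} be d×d circulant matrices whose columns form m mutually unbiased frames of d unit vectors each in C^d, with overlap c. Then |λ(M_j)·λ(M_k)|² = c·d² for all j ≠ k, where λ(M_j)·λ(M_k) = Σ_s conj(λ(M_j)_s)·λ(M_k)_s; hence the normalized eigenvalue vectors λ(M_j)/√d form m equiangular lines in C^d with pairwise squared overlap c. -/
/-!
The Fourier matrix `F` is unitary, so `M_jᴴ M_k = F · diagonal (conj λ_j · λ_k) · Fᴴ`. The zeroth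
row of `F` is constant `1/√d`, hence the `(0,0)` entry of this product is
`(1/d) ∑ₛ conj (λ_j s) λ_k s`, whose squared modulus is `c` by mutual unbiasedness.
-/

open Matrix

/-- The discrete Fourier transform matrix `F_{jk} = ω^{jk}/√d`, `ω = e^{2πi/d}`. -/
noncomputable def Fmat (d : ℕ) : Matrix (Fin d) (Fin d) ℂ :=
  fun j k => Complex.exp (2 * Real.pi * Complex.I * ((j : ℕ) : ℂ) * ((k : ℕ) : ℂ) / d) /
    (Real.sqrt d : ℂ)

/-- The circulant matrix with first row `v`: entries `M_{jk} = v_{(k-j) mod d}`. -/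
def circulantRow {d : ℕ} (v : Fin d → ℂ) : Matrix (Fin d) (Fin d) ℂ :=
  fun j k => v (k - j)

namespace Matrix

variable {n R : Type*} [Fintype n] [DecidableEq n] [Semiring R] [StarRing R]

theorem conjTranspose_conj_diagonal_mul_conj_diagonal {U : Matrix n n R} (hU : Uᴴ * U = 1)
    (a b : n → R) :
    (U * diagonal a * Uᴴ)ᴴ * (U * diagonal b * Uᴴ) = U * diagonal (star a * b) * Uᴴ := by
  simp only [conjTranspose_mul, conjTranspose_conjTranspose, diagonal_conjTranspose,
    Matrix.mul_assoc]
  rw [← Matrix.mul_assoc Uᴴ, hU, Matrix.one_mul, ← Matrix.mul_assoc (diagonal _),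
    diagonal_mul_diagonal]
  rfl

end Matrix

lemma geom_sum_eq_zero_of_pow_eq_one {K : Type*} [Field K] {ω : K} {n : ℕ} (hω : ω ^ n = 1)
    (h1 : ω ≠ 1) : ∑ i ∈ Finset.range n, ω ^ i = 0 := by
  rw [geom_sum_eq h1, hω, sub_self, zero_div]

namespace Complex

lemma ofReal_sqrt_natCast_mul_self (d : ℕ) : (Real.sqrt d : ℂ) * (Real.sqrt d : ℂ) = d := by
  rw [← ofReal_mul, Real.mul_self_sqrt d.cast_nonneg, ofReal_natCast]

lemma star_one_div_sqrt_natCast_mul_self (d : ℕ) :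
    star (1 / (Real.sqrt d : ℂ)) * (1 / (Real.sqrt d : ℂ)) = 1 / d := by
  rw [star_div₀, star_one, star_def, conj_ofReal, one_div_mul_one_div,
    ofReal_sqrt_natCast_mul_self]

end Complex

namespace Fmat

open Complex

lemma apply_eq_pow (d : ℕ) (j k : Fin d) :
    Fmat d j k = (exp (2 * Real.pi * I / d) ^ (k : ℕ)) ^ (j : ℕ) / (Real.sqrt d : ℂ) := by
  rw [Fmat, ← pow_mul, ← Complex.exp_nat_mul]
  push_cast
  ring_nf

lemma star_exp_two_pi_I_div (d : ℕ) :
    star (exp (2 * Real.pi * I / d)) = (exp (2 * Real.pi * I / d))⁻¹ := by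
  rw [← Complex.exp_neg, star_def, ← exp_conj]
  simp only [map_div₀, map_mul, conj_ofReal, conj_I, map_natCast, map_ofNat]
  ring_nf

lemma star_apply_mul_apply (d : ℕ) (p s t : Fin d) :
    star (Fmat d p s) * Fmat d p t =
      ((exp (2 * Real.pi * I / d) ^ (s : ℕ))⁻¹ *
        exp (2 * Real.pi * I / d) ^ (t : ℕ)) ^ (p : ℕ) / d := by
  rw [apply_eq_pow, apply_eq_pow, star_div₀, star_pow, star_pow, star_exp_two_pi_I_div,
    ← ofReal_sqrt_natCast_mul_self, inv_pow, div_mul_div_comm, mul_pow]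
  simp only [star_def, conj_ofReal]

theorem conjTranspose_mul_self (d : ℕ) [NeZero d] : (Fmat d)ᴴ * Fmat d = 1 := by
  set ζ := exp (2 * Real.pi * I / d)
  have hζ : IsPrimitiveRoot ζ d := isPrimitiveRoot_exp d (NeZero.ne d)
  have hζ0 : ζ ≠ 0 := hζ.ne_zero (NeZero.ne d)
  ext s t
  set ω := (ζ ^ (s : ℕ))⁻¹ * ζ ^ (t : ℕ)
  simp only [mul_apply, conjTranspose_apply, star_apply_mul_apply, ← Finset.sum_div]
  rw [Fin.sum_univ_eq_sum_range (fun p => ω ^ p)]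
  by_cases hst : s = t
  · subst hst
    have hd : (d : ℂ) ≠ 0 := Nat.cast_ne_zero.mpr (NeZero.ne d)
    simp [ω, hζ0, hd]
  · have hω : ω ^ d = 1 := by
      have hpow (n : ℕ) : (ζ ^ n) ^ d = 1 := by rw [pow_right_comm, hζ.pow_eq_one, one_pow]
      rw [mul_pow, inv_pow, hpow, hpow, inv_one, one_mul]
    have h1 : ω ≠ 1 := by
      rw [Ne, inv_mul_eq_one₀ (pow_ne_zero _ hζ0)]
      exact fun h => hst (Fin.ext (hζ.pow_inj s.isLt t.isLt h))
    rw [geom_sum_eq_zero_of_pow_eq_one hω h1, zero_div, one_apply_ne hst]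

lemma apply_zero (d : ℕ) [NeZero d] (s : Fin d) : Fmat d 0 s = 1 / (Real.sqrt d : ℂ) := by
  simp [Fmat]

lemma mul_diagonal_mul_conjTranspose_apply_zero_zero (d : ℕ) [NeZero d] (v : Fin d → ℂ) :
    (Fmat d * diagonal v * (Fmat d)ᴴ) 0 0 = (∑ s, v s) / d := by
  rw [mul_apply, Finset.sum_div]
  refine Finset.sum_congr rfl fun s _ => ?_
  rw [mul_diagonal, conjTranspose_apply, apply_zero, mul_comm (1 / _) (v s), mul_assoc,
    mul_comm (1 / _) (star _), Complex.star_one_div_sqrt_natCast_mul_self, mul_one_div]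

end Fmat

theorem muf_circulant_equiangular_eigenvectors_general (d m : ℕ) [NeZero d] (c : ℝ)
    (M : Fin m → Matrix (Fin d) (Fin d) ℂ)
    (lam : Fin m → Fin d → ℂ)
    (hdiag : ∀ ℓ, M ℓ = Fmat d * Matrix.diagonal (lam ℓ) * (Fmat d)ᴴ)
    (hmuf : ∀ j k, j ≠ k → ∀ s t, ‖((M j)ᴴ * M k) s t‖ ^ 2 = c) :
    (∀ j k, j ≠ k → ‖∑ s, (starRingEnd ℂ) (lam j s) * lam k s‖ ^ 2 = c * d ^ 2) ∧
    (∀ j k, j ≠ k →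
      ‖∑ s, (starRingEnd ℂ) ((1 / (Real.sqrt d : ℂ)) * lam j s) *
        ((1 / (Real.sqrt d : ℂ)) * lam k s)‖ ^ 2 = c) := by
  have hentry (j k : Fin m) :
      ((M j)ᴴ * M k) 0 0 = (∑ s, (starRingEnd ℂ) (lam j s) * lam k s) / d := by
    rw [hdiag j, hdiag k,
      conjTranspose_conj_diagonal_mul_conj_diagonal (Fmat.conjTranspose_mul_self d),
      Fmat.mul_diagonal_mul_conjTranspose_apply_zero_zero]
    rfl
  have hscaled (j k : Fin m) :
      ∑ s, (starRingEnd ℂ) ((1 / (Real.sqrt d : ℂ)) * lam j s) *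
          ((1 / (Real.sqrt d : ℂ)) * lam k s) =
        (∑ s, (starRingEnd ℂ) (lam j s) * lam k s) / d := by
    rw [Finset.sum_div]
    refine Finset.sum_congr rfl fun s _ => ?_
    rw [map_mul, mul_mul_mul_comm, ← Complex.star_def,
      Complex.star_one_div_sqrt_natCast_mul_self, one_div_mul_eq_div]
  have hd : ‖(d : ℂ)‖ ≠ 0 := by simpa using NeZero.ne d
  refine ⟨fun j k hjk => ?_, fun j k hjk => ?_⟩
  · have h := hmuf j k hjk 0 0
    rw [hentry, norm_div, div_pow, div_eq_iff (pow_ne_zero 2 hd), Complex.norm_natCast] at h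
    exact h
  · rw [hscaled, ← hentry]
    exact hmuf j k hjk 0 0

/-- If `m` circulant matrices `M_0,…,M_{m-1}` of order `d` have columns
forming `m` mutually unbiased frames of `d` unit vectors each with overlap `c`, then
`|λ(M_j)·λ(M_k)|² = c·d²` for all `j ≠ k`; hence the normalized eigenvalue vectors
`λ(M_j)/√d` form `m` equiangular lines in ℂ^d with pairwise squared overlap `c`. -/
theorem muf_circulant_equiangular_eigenvectors (d m : ℕ) [NeZero d] (c : ℝ) (hc : 0 < c)
    (M : Fin m → Matrix (Fin d) (Fin d) ℂ)
    (lam : Fin m → Fin d → ℂ)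
    (hcirc : ∀ ℓ, ∃ μ : Fin d → ℂ, M ℓ = circulantRow μ)
    (hdiag : ∀ ℓ, M ℓ = Fmat d * Matrix.diagonal (lam ℓ) * (Fmat d)ᴴ)
    (hunit : ∀ ℓ k, ∑ j, ‖M ℓ j k‖ ^ 2 = 1)
    (hframe : ∀ ℓ, LinearIndependent ℂ (fun k => (M ℓ)ᵀ k))
    (hmuf : ∀ j k, j ≠ k → ∀ s t, ‖((M j)ᴴ * M k) s t‖ ^ 2 = c) :
    (∀ j k, j ≠ k → ‖∑ s, (starRingEnd ℂ) (lam j s) * lam k s‖ ^ 2 = c * d ^ 2) ∧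
    (∀ j k, j ≠ k →
      ‖∑ s, (starRingEnd ℂ) ((1 / (Real.sqrt d : ℂ)) * lam j s) *
        ((1 / (Real.sqrt d : ℂ)) * lam k s)‖ ^ 2 = c) :=
  muf_circulant_equiangular_eigenvectors_general d m c M lam hdiag hmuf
end

section
/- For d = 2, the circulant matrices M_1 = [[cos θ, sin θ·e^{iα}],[sin θ·e^{iα}, cos θ]] and M_2 = [[cos η, sin η·e^{iβ}],[sin η·e^{iβ}, cos η]] have the property that the two entries of M_1† M_2 in its first row have equal modulus whenever sin α · sin β · tan 2θ · tan 2η = −1; therefore in that case their columns form a pair of mutually unbiased frames with overlap c = cos²(η−θ) + 2 sin η cos η sin θ cos θ (cos(α−β) − 1), provided the columns of each M_i are linearly independent. -/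
open Matrix Real

/-!
Both matrices are circulant over `ZMod 2 ≅ Fin 2`, so `M₁ᴴ M₂` is circulant too, generated by
the cross-correlation of the two first columns. Its entries therefore take only two values, at
lag `0` and lag `1`. The squared modulus at lag `0` is the overlap `c` for all parameters, and the
difference of the squared moduli at lags `0` and `1` is
`cos 2θ cos 2η + sin α sin β sin 2θ sin 2η`, which vanishes exactly when the tangent condition holds.
-/

theorem norm_sq_ofReal_add_ofReal_mul_exp (x y γ : ℝ) :
    ‖(x : ℂ) + y * Complex.exp (γ * Complex.I)‖ ^ 2 = x ^ 2 + y ^ 2 + 2 * x * y * cos γ := by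
  rw [Complex.sq_norm, Complex.normSq_apply]
  simp only [Complex.add_re, Complex.add_im, Complex.mul_re, Complex.mul_im, Complex.ofReal_re,
    Complex.ofReal_im, Complex.exp_ofReal_mul_I_re, Complex.exp_ofReal_mul_I_im]
  linear_combination y ^ 2 * cos_sq_add_sin_sq γ

theorem cos_two_mul_mul_cos_two_mul_add_eq_zero {θ η α β : ℝ}
    (h : sin α * sin β * tan (2 * θ) * tan (2 * η) = -1) :
    cos (2 * θ) * cos (2 * η) + sin α * sin β * sin (2 * θ) * sin (2 * η) = 0 := by
  -- `tan x = sin x / cos x` is `0` when `cos x = 0`, so `h` rules that case out.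
  have hθ : cos (2 * θ) ≠ 0 := fun h0 => by simp [tan_eq_sin_div_cos, h0] at h
  have hη : cos (2 * η) ≠ 0 := fun h0 => by simp [tan_eq_sin_div_cos, h0] at h
  rw [tan_eq_sin_div_cos, tan_eq_sin_div_cos] at h
  field_simp at h
  linear_combination h

def crossCorrelation {n R : Type*} [Add n] [Fintype n] [Mul R] [AddCommMonoid R] [Star R]
    (v w : n → R) (d : n) : R :=
  ∑ m, star (v m) * w (m + d)

theorem Matrix.conjTranspose_circulant_mul_circulant {n R : Type*} [AddCommGroup n] [Fintype n]
    [NonUnitalNonAssocSemiring R] [StarRing R] (v w : n → R) :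
    (circulant v)ᴴ * circulant w = circulant (crossCorrelation v w) := by
  ext j k
  simp only [mul_apply, conjTranspose_apply, circulant_apply, crossCorrelation]
  exact Fintype.sum_equiv (Equiv.subRight j) _ _ fun i => by simp [sub_add_sub_cancel]

noncomputable def qubitVec (θ α : ℝ) : Fin 2 → ℂ :=
  ![(cos θ : ℂ), (sin θ : ℂ) * Complex.exp (Complex.I * α)]

theorem circulant_qubitVec (θ α : ℝ) :
    circulant (qubitVec θ α) = Matrix.of
      ![![(cos θ : ℂ), (sin θ : ℂ) * Complex.exp (Complex.I * α)],
        ![(sin θ : ℂ) * Complex.exp (Complex.I * α), (cos θ : ℂ)]] := by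
  ext i j
  fin_cases i <;> fin_cases j <;> rfl

theorem star_qubitVec_zero (θ α : ℝ) : star (qubitVec θ α 0) = cos θ := by
  simp only [qubitVec, Matrix.cons_val_zero, Complex.star_def, Complex.conj_ofReal]

theorem star_qubitVec_one (θ α : ℝ) :
    star (qubitVec θ α 1) = sin θ * Complex.exp ((-α : ℝ) * Complex.I) := by
  simp only [qubitVec, Matrix.cons_val_one, Matrix.cons_val_zero, Complex.star_def, map_mul,
    Complex.conj_ofReal, ← Complex.exp_conj, Complex.conj_I]
  push_cast
  ring_nf

theorem crossCorrelation_qubitVec_zero (θ α η β : ℝ) :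
    crossCorrelation (qubitVec θ α) (qubitVec η β) 0 =
      ((cos θ * cos η : ℝ) : ℂ) +
        (sin θ * sin η : ℝ) * Complex.exp ((β - α : ℝ) * Complex.I) := by
  rw [crossCorrelation, Fin.sum_univ_two, zero_add, add_zero, star_qubitVec_zero,
    star_qubitVec_one]
  simp only [qubitVec, Matrix.cons_val_zero, Matrix.cons_val_one]
  rw [sub_eq_add_neg, Complex.ofReal_add, add_mul, Complex.exp_add]
  push_cast
  ring_nf

theorem crossCorrelation_qubitVec_one (θ α η β : ℝ) :
    crossCorrelation (qubitVec θ α) (qubitVec η β) 1 =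
      Complex.exp ((-α : ℝ) * Complex.I) *
        (((sin θ * cos η : ℝ) : ℂ) +
          (cos θ * sin η : ℝ) * Complex.exp ((α + β : ℝ) * Complex.I)) := by
  rw [crossCorrelation, Fin.sum_univ_two, zero_add, star_qubitVec_zero, star_qubitVec_one]
  simp only [qubitVec, Matrix.cons_val_zero, Matrix.cons_val_one, Fin.reduceAdd]
  rw [Complex.ofReal_add, add_mul, Complex.exp_add, Complex.ofReal_neg, neg_mul, Complex.exp_neg]
  field_simp
  push_cast
  ring

theorem norm_sq_crossCorrelation_qubitVec_zero (θ α η β : ℝ) :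
    ‖crossCorrelation (qubitVec θ α) (qubitVec η β) 0‖ ^ 2 =
      cos (η - θ) ^ 2 + 2 * sin η * cos η * sin θ * cos θ * (cos (α - β) - 1) := by
  rw [crossCorrelation_qubitVec_zero, norm_sq_ofReal_add_ofReal_mul_exp, cos_sub, cos_sub,
    cos_sub]
  ring

theorem norm_sq_crossCorrelation_qubitVec_one (θ α η β : ℝ) :
    ‖crossCorrelation (qubitVec θ α) (qubitVec η β) 1‖ ^ 2 =
      (sin θ * cos η) ^ 2 + (cos θ * sin η) ^ 2 +
        2 * (sin θ * cos η) * (cos θ * sin η) * cos (α + β) := by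
  rw [crossCorrelation_qubitVec_one, norm_mul, Complex.norm_exp_ofReal_mul_I, one_mul,
    norm_sq_ofReal_add_ofReal_mul_exp]

theorem norm_sq_crossCorrelation_qubitVec_zero_sub_one (θ α η β : ℝ) :
    ‖crossCorrelation (qubitVec θ α) (qubitVec η β) 0‖ ^ 2 -
        ‖crossCorrelation (qubitVec θ α) (qubitVec η β) 1‖ ^ 2 =
      cos (2 * θ) * cos (2 * η) + sin α * sin β * sin (2 * θ) * sin (2 * η) := by
  rw [norm_sq_crossCorrelation_qubitVec_zero, norm_sq_crossCorrelation_qubitVec_one,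
    cos_two_mul', cos_two_mul', sin_two_mul, sin_two_mul, cos_add, cos_sub, cos_sub]
  ring

theorem qubit_circulant_muf_general (θ η α β : ℝ)
    (M₁ M₂ : Matrix (Fin 2) (Fin 2) ℂ)
    (hM₁ : M₁ = Matrix.of
      ![![(Real.cos θ : ℂ), (Real.sin θ : ℂ) * Complex.exp (Complex.I * α)],
        ![(Real.sin θ : ℂ) * Complex.exp (Complex.I * α), (Real.cos θ : ℂ)]])
    (hM₂ : M₂ = Matrix.of
      ![![(Real.cos η : ℂ), (Real.sin η : ℂ) * Complex.exp (Complex.I * β)],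
        ![(Real.sin η : ℂ) * Complex.exp (Complex.I * β), (Real.cos η : ℂ)]])
    (hcond : Real.sin α * Real.sin β * Real.tan (2 * θ) * Real.tan (2 * η) = -1) :
    ‖(M₁ᴴ * M₂) 0 0‖ = ‖(M₁ᴴ * M₂) 0 1‖ ∧
    ∀ j k, ‖(M₁ᴴ * M₂) j k‖ ^ 2 =
      Real.cos (η - θ) ^ 2 +
        2 * Real.sin η * Real.cos η * Real.sin θ * Real.cos θ *
          (Real.cos (α - β) - 1) := by
  set c := crossCorrelation (qubitVec θ α) (qubitVec η β)
  have hprod : M₁ᴴ * M₂ = circulant c := by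
    rw [hM₁, hM₂, ← circulant_qubitVec, ← circulant_qubitVec,
      conjTranspose_circulant_mul_circulant]
  have hlag : ‖c 1‖ = ‖c 0‖ := by
    rw [← pow_left_inj₀ (norm_nonneg _) (norm_nonneg _) two_ne_zero, eq_comm, ← sub_eq_zero,
      norm_sq_crossCorrelation_qubitVec_zero_sub_one,
      cos_two_mul_mul_cos_two_mul_add_eq_zero hcond]
  have hentry : ∀ j k, ‖(M₁ᴴ * M₂) j k‖ = ‖c 0‖ := by
    intro j k
    rw [hprod, circulant_apply]
    obtain h | h : j - k = 0 ∨ j - k = 1 := by omega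
    · rw [h]
    · rw [h, hlag]
  exact ⟨by rw [hentry, hentry],
    fun j k => by rw [hentry, norm_sq_crossCorrelation_qubitVec_zero]⟩

/-- For `d = 2`, the circulant matrices
`M₁ = [[cos θ, sin θ e^{iα}],[sin θ e^{iα}, cos θ]]` and
`M₂ = [[cos η, sin η e^{iβ}],[sin η e^{iβ}, cos η]]` are such that, whenever
`sin α sin β tan 2θ tan 2η = −1`, the two entries of the first row of `M₁† M₂` have
equal modulus; hence (provided the columns of each `Mᵢ` are linearly independent)
their columns form a pair of mutually unbiased frames with overlap
`c = cos²(η−θ) + 2 sin η cos η sin θ cos θ (cos(α−β) − 1)`. -/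
theorem qubit_circulant_muf (θ η α β : ℝ)
    (M₁ M₂ : Matrix (Fin 2) (Fin 2) ℂ)
    (hM₁ : M₁ = Matrix.of
      ![![(Real.cos θ : ℂ), (Real.sin θ : ℂ) * Complex.exp (Complex.I * α)],
        ![(Real.sin θ : ℂ) * Complex.exp (Complex.I * α), (Real.cos θ : ℂ)]])
    (hM₂ : M₂ = Matrix.of
      ![![(Real.cos η : ℂ), (Real.sin η : ℂ) * Complex.exp (Complex.I * β)],
        ![(Real.sin η : ℂ) * Complex.exp (Complex.I * β), (Real.cos η : ℂ)]])
    (hcond : Real.sin α * Real.sin β * Real.tan (2 * θ) * Real.tan (2 * η) = -1)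
    (hli₁ : LinearIndependent ℂ (fun k => M₁ᵀ k))
    (hli₂ : LinearIndependent ℂ (fun k => M₂ᵀ k)) :
    ‖(M₁ᴴ * M₂) 0 0‖ = ‖(M₁ᴴ * M₂) 0 1‖ ∧
    ∀ j k, ‖(M₁ᴴ * M₂) j k‖ ^ 2 =
      Real.cos (η - θ) ^ 2 +
        2 * Real.sin η * Real.cos η * Real.sin θ * Real.cos θ *
          (Real.cos (α - β) - 1) :=
  qubit_circulant_muf_general θ η α β M₁ M₂ hM₁ hM₂ hcond
end

section
/- For any d×d circulant matrix M with unit-norm columns that form a frame (all eigenvalues nonzero), there exists a circulant matrix M̃ whose columns are unit vectors forming a frame, such that M and M̃ form a pair of mutually unbiased frames; the overlap is c = 1/(Σ_{j=0}^{d−1} 1/r_j²), where r_j = |λ(M)_j|. -/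
open Matrix

/-!
Write `M = F Λ F†`. Then `M† M̃ = F diag(conj λ · λ̃) F†`, so the choice
`λ̃_j = α q_j / conj λ_j` with a unimodular sequence `q` makes `M† M̃` the multiple
`α F diag(q) F†` of a circulant matrix whose entries are normalised Fourier coefficients of `q`.
For the chirp `q_n = exp(π i (d+1) n² / d)` all of them have modulus `1/√d`: since
`q (x + y) = q x q y ω^{xy}`, the cross terms of `|∑ q|²` collapse to a character sum that
vanishes off the diagonal. The scale `α² = d / ∑ 1/|λ_j|²` makes the columns of `M̃` unit
vectors by Parseval.
-/

open Complex Finset ComplexConjugate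

theorem AddChar.IsPrimitive.compAddMonoidHom_ringEquiv {R S : Type*} [CommRing R] [CommRing S]
    {ψ : AddChar S ℂ} (hψ : ψ.IsPrimitive) (e : R ≃+* S) :
    (ψ.compAddMonoidHom e.toAddMonoidHom).IsPrimitive := by
  intro a ha h
  refine hψ ((map_ne_zero_iff e e.injective).mpr ha) ?_
  ext x
  simpa [AddChar.mulShift_apply] using DFunLike.congr_fun h (e.symm x)

theorem AddChar.IsPrimitive.sq_norm_sum_eq_card_of_map_add {R : Type*} [CommRing R] [Fintype R]
    {ψ : AddChar R ℂ} (hψ : ψ.IsPrimitive) {q : R → ℂ} (hq : ∀ x, ‖q x‖ = 1)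
    (hq_add : ∀ x y, q (x + y) = q x * q y * ψ (x * y)) :
    ‖∑ x, q x‖ ^ 2 = Fintype.card R := by
  classical
  have hq_conj : ∀ x, q x * conj (q x) = 1 := fun x => by simp [mul_conj', hq]
  have hq_zero : q 0 = 1 := by
    have h := hq_add 0 0
    simp only [add_zero, mul_zero, AddChar.map_zero_eq_one, mul_one] at h
    have h0 : q 0 ≠ 0 := norm_ne_zero_iff.mp (by rw [hq]; exact one_ne_zero)
    exact (mul_eq_left₀ h0).mp h.symm
  have hcross : ∀ y, ∑ x, q x * conj (q y) = ∑ k, q k * ψ (y * k) := fun y => by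
    rw [← Equiv.sum_comp (Equiv.addLeft y)]
    refine sum_congr rfl fun k _ => ?_
    simp only [Equiv.coe_addLeft, hq_add]
    linear_combination (q k * ψ (y * k)) * hq_conj y
  apply ofReal_injective
  push_cast
  rw [← mul_conj', map_sum, sum_mul_sum, sum_comm]
  simp_rw [hcross]
  rw [sum_comm]
  simp_rw [← mul_sum, AddChar.sum_mulShift _ hψ]
  simp [hq_zero]

theorem ZMod.finEquiv_apply (d : ℕ) [NeZero d] (x : Fin d) : ZMod.finEquiv d x = x.val := by
  obtain ⟨n, rfl⟩ := Nat.exists_eq_succ_of_ne_zero (NeZero.ne d)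
  exact (Fin.cast_val_eq_self x).symm

noncomputable def stdAddCharFin (d : ℕ) [NeZero d] : AddChar (Fin d) ℂ :=
  ZMod.stdAddChar.compAddMonoidHom (ZMod.finEquiv d : Fin d →+ ZMod d)

section stdAddCharFin

variable {d : ℕ} [NeZero d]

open Fin.CommRing in
theorem isPrimitive_stdAddCharFin : (stdAddCharFin d).IsPrimitive :=
  (ZMod.isPrimitive_stdAddChar d).compAddMonoidHom_ringEquiv _

theorem stdAddCharFin_mul (j k : Fin d) :
    stdAddCharFin d (j * k) = exp (2 * Real.pi * I * j.val * k.val / d) := by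
  rw [stdAddCharFin, AddChar.compAddMonoidHom_apply, AddMonoidHom.coe_coe, map_mul,
    ZMod.finEquiv_apply, ZMod.finEquiv_apply, ← Nat.cast_mul,
    ZMod.stdAddChar_apply, ZMod.toCircle_natCast]
  push_cast
  ring_nf

end stdAddCharFin

/-- The factor `d + 1` makes the chirp `d`-periodic also for even `d`. -/
noncomputable def chirp (d : ℕ) (n : ℤ) : ℂ :=
  exp ((Real.pi * (d + 1) * n ^ 2 / d : ℝ) * I)

theorem norm_chirp {d : ℕ} (n : ℤ) : ‖chirp d n‖ = 1 := norm_exp_ofReal_mul_I _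

section chirp

variable {d : ℕ} [NeZero d]

theorem chirp_add (m n : ℤ) :
    chirp d (m + n) = chirp d m * chirp d n * exp (2 * Real.pi * I * m * n / d) := by
  rw [chirp, chirp, chirp, ← exp_add, ← exp_add, ← mul_one (exp (_ + _ + _)),
    ← exp_int_mul_two_pi_mul_I (m * n), ← exp_add]
  congr 1
  have : (d : ℂ) ≠ 0 := NeZero.ne _
  push_cast
  field_simp
  ring

theorem chirp_periodic : Function.Periodic (chirp d) d := fun n => by
  have hd : (d : ℂ) ≠ 0 := NeZero.ne _
  have hchirp_d : chirp d d = 1 := by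
    obtain ⟨r, hr⟩ := Int.even_mul_succ_self d
    have hr' : (d * (d + 1) : ℂ) = r + r := by exact_mod_cast hr
    rw [chirp, ← exp_int_mul_two_pi_mul_I r]
    congr 1
    push_cast
    field_simp
    linear_combination hr'
  rw [chirp_add, hchirp_d, mul_one,
    show 2 * Real.pi * I * n * ((d : ℤ) : ℂ) / d = n * (2 * Real.pi * I) by push_cast; field_simp,
    exp_int_mul_two_pi_mul_I, mul_one]

theorem chirp_emod (n : ℤ) : chirp d (n % d) = chirp d n := by
  rw [Int.emod_def, mul_comm]
  exact chirp_periodic.sub_int_mul_eq _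

theorem chirp_val_add (x y : Fin d) :
    chirp d (x + y).val = chirp d x.val * chirp d y.val * stdAddCharFin d (x * y) := by
  rw [Fin.val_add, Int.natCast_mod, chirp_emod, Nat.cast_add, chirp_add, stdAddCharFin_mul]
  rfl

end chirp

theorem Matrix.sum_sq_norm_apply_eq_conjTranspose_mul_self_apply {m n : Type*} [Fintype m]
    (A : Matrix m n ℂ) (k : n) : ((∑ j, ‖A j k‖ ^ 2 : ℝ) : ℂ) = (Aᴴ * A) k k := by
  simp [mul_apply, conj_mul']

noncomputable def fourierDiag (d : ℕ) (v : Fin d → ℂ) : Matrix (Fin d) (Fin d) ℂ :=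
  Fmat d * diagonal v * (Fmat d)ᴴ

theorem fourierDiag_smul {d : ℕ} (c : ℂ) (v : Fin d → ℂ) :
    fourierDiag d (c • v) = c • fourierDiag d v := by
  rw [fourierDiag, fourierDiag, diagonal_smul, Matrix.mul_smul, Matrix.smul_mul]

section fourierDiag

variable {d : ℕ} [NeZero d]

theorem Fmat_apply (j k : Fin d) : Fmat d j k = stdAddCharFin d (j * k) / (√d : ℝ) := by
  rw [stdAddCharFin_mul]
  rfl

theorem fourierDiag_apply (v : Fin d → ℂ) (j k : Fin d) :
    fourierDiag d v j k = (∑ a, stdAddCharFin d ((j - k) * a) * v a) / d := by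
  have hsqrt : ((√d : ℝ) : ℂ) * (√d : ℝ) = d := by
    rw [← ofReal_mul, Real.mul_self_sqrt d.cast_nonneg, ofReal_natCast]
  have hd : ((√d : ℝ) : ℂ) ≠ 0 := by
    rw [ofReal_ne_zero, Real.sqrt_ne_zero']
    exact_mod_cast Nat.pos_of_neZero d
  rw [fourierDiag, mul_apply, sum_div]
  refine sum_congr rfl fun a _ => ?_
  rw [mul_diagonal, conjTranspose_apply, Fmat_apply, Fmat_apply, star_div₀, star_def,
    ← AddChar.map_neg_eq_conj, conj_ofReal, sub_mul, sub_eq_add_neg, ← neg_mul,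
    AddChar.map_add_eq_mul, ← hsqrt]
  field_simp

open Fin.CommRing in
theorem Fmat_mul_conjTranspose : Fmat d * (Fmat d)ᴴ = 1 := by
  ext j k
  have h := fourierDiag_apply (fun _ => 1) j k
  rw [fourierDiag, diagonal_one, Matrix.mul_one] at h
  simp_rw [h, mul_one, ← mul_comm _ (j - k), AddChar.sum_mulShift _ isPrimitive_stdAddCharFin,
    sub_eq_zero, one_apply, Fintype.card_fin]
  split_ifs <;> simp

theorem Fmat_mem_unitaryGroup : Fmat d ∈ unitaryGroup (Fin d) ℂ :=
  mem_unitaryGroup_iff.mpr Fmat_mul_conjTranspose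

theorem conjTranspose_fourierDiag_mul_fourierDiag (u v : Fin d → ℂ) :
    (fourierDiag d u)ᴴ * fourierDiag d v = fourierDiag d (star u * v) := by
  have hF : (Fmat d)ᴴ * Fmat d = 1 := mem_unitaryGroup_iff'.mp Fmat_mem_unitaryGroup
  simp only [fourierDiag, conjTranspose_mul, conjTranspose_conjTranspose, diagonal_conjTranspose,
    Matrix.mul_assoc]
  rw [← Matrix.mul_assoc (Fmat d)ᴴ, hF, Matrix.one_mul, ← Matrix.mul_assoc (diagonal _),
    diagonal_mul_diagonal]
  rfl

theorem isUnit_fourierDiag {v : Fin d → ℂ} (hv : ∀ a, v a ≠ 0) : IsUnit (fourierDiag d v) :=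
  have hF : IsUnit (Fmat d) := Unitary.isUnit_coe (U := ⟨_, Fmat_mem_unitaryGroup⟩)
  (hF.mul (isUnit_diagonal.mpr (Pi.isUnit_iff.mpr fun a => (hv a).isUnit))).mul hF.star

theorem fourierDiag_eq_circulantRow (v : Fin d → ℂ) :
    fourierDiag d v = circulantRow fun m => (∑ a, stdAddCharFin d (-m * a) * v a) / d := by
  ext j k
  rw [fourierDiag_apply, circulantRow, neg_sub]

theorem sum_sq_norm_fourierDiag_apply (v : Fin d → ℂ) (k : Fin d) :
    ∑ j, ‖fourierDiag d v j k‖ ^ 2 = (∑ a, ‖v a‖ ^ 2) / d := by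
  apply ofReal_injective
  rw [sum_sq_norm_apply_eq_conjTranspose_mul_self_apply, conjTranspose_fourierDiag_mul_fourierDiag,
    fourierDiag_apply]
  simp [conj_mul']

open Fin.CommRing in
theorem sq_norm_fourierDiag_chirp_apply (s t : Fin d) :
    ‖fourierDiag d (fun a => chirp d a.val) s t‖ ^ 2 = 1 / d := by
  set ψ := stdAddCharFin d
  have hflat := isPrimitive_stdAddCharFin.sq_norm_sum_eq_card_of_map_add
    (q := fun a => ψ ((s - t) * a) * chirp d a.val)
    (fun a => by rw [norm_mul, norm_chirp, AddChar.norm_apply, one_mul])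
    (fun a b => by rw [mul_add, AddChar.map_add_eq_mul, chirp_val_add]; ring)
  have : (d : ℝ) ≠ 0 := NeZero.ne _
  rw [fourierDiag_apply, norm_div, div_pow, hflat, Fintype.card_fin, norm_natCast]
  field_simp

end fourierDiag

theorem exists_unbiased_circulant_partner_general (d : ℕ) [NeZero d]
    (M : Matrix (Fin d) (Fin d) ℂ) (lam : Fin d → ℂ)
    (hdiag : M = Fmat d * Matrix.diagonal lam * (Fmat d)ᴴ)
    (hframe : ∀ j, lam j ≠ 0) :
    ∃ Mt : Matrix (Fin d) (Fin d) ℂ,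
      (∃ ν, Mt = circulantRow ν) ∧
      (∀ k, ∑ j, ‖Mt j k‖ ^ 2 = 1) ∧
      LinearIndependent ℂ (fun k => Mtᵀ k) ∧
      ∀ s t, ‖(Mᴴ * Mt) s t‖ ^ 2 = 1 / (∑ j, 1 / ‖lam j‖ ^ 2) := by
  set S := ∑ j, 1 / ‖lam j‖ ^ 2
  have hS : 0 < S := sum_pos (fun j _ => by have := norm_pos_iff.mpr (hframe j); positivity)
    univ_nonempty
  have hd : (d : ℝ) ≠ 0 := NeZero.ne _
  set α := √(d / S)
  have hα : α ^ 2 = d / S := Real.sq_sqrt (by positivity)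
  have hα0 : (α : ℂ) ≠ 0 := ofReal_ne_zero.mpr (Real.sqrt_pos.mpr (by positivity)).ne'
  -- the paper's `λ(M̃)_a = √(cd) / r_a · e^{i (arg λ_a + γ_a)}`, `c = 1 / S`, `e^{iγ}` the chirp
  set lamt : Fin d → ℂ := fun a => α * chirp d a.val / star (lam a)
  have hnorm_lamt (a : Fin d) : ‖lamt a‖ ^ 2 = d / S * (1 / ‖lam a‖ ^ 2) := by
    simp only [lamt, norm_div, norm_mul, norm_chirp, norm_star, norm_real, Real.norm_eq_abs,
      div_pow, mul_pow, sq_abs, hα]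
    ring
  have hdual : star lam * lamt = (α : ℂ) • fun a => chirp d a.val := funext fun a => by
    simp only [lamt, Pi.mul_apply, Pi.star_apply, Pi.smul_apply, smul_eq_mul]
    rw [mul_div_assoc', mul_div_cancel_left₀ _ (star_ne_zero.mpr (hframe a))]
  refine ⟨fourierDiag d lamt, ⟨_, fourierDiag_eq_circulantRow lamt⟩, fun k => ?_,
    linearIndependent_cols_iff_isUnit.mpr (isUnit_fourierDiag fun a => ?_), fun s t => ?_⟩
  · rw [sum_sq_norm_fourierDiag_apply, sum_congr rfl fun a _ => hnorm_lamt a, ← mul_sum,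
      div_mul_cancel₀ _ hS.ne', div_self hd]
  · exact div_ne_zero (mul_ne_zero hα0 (exp_ne_zero _)) (star_ne_zero.mpr (hframe a))
  · rw [show M = fourierDiag d lam from hdiag, conjTranspose_fourierDiag_mul_fourierDiag, hdual,
      fourierDiag_smul, Matrix.smul_apply, smul_eq_mul, norm_mul, mul_pow,
      sq_norm_fourierDiag_chirp_apply, norm_real, Real.norm_eq_abs, sq_abs, hα]
    field_simp

/-- For any circulant `M` with unit-norm columns forming a frame (all
eigenvalues nonzero), there exists a circulant `M̃` with unit-norm columns forming a
frame such that `M` and `M̃` are a pair of mutually unbiased frames, with overlap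
`c = 1/(∑_j 1/r_j²)` where `r_j = |λ(M)_j|`. -/
theorem exists_unbiased_circulant_partner (d : ℕ) [NeZero d]
    (M : Matrix (Fin d) (Fin d) ℂ) (lam : Fin d → ℂ)
    (hcirc : ∃ μ, M = circulantRow μ)
    (hdiag : M = Fmat d * Matrix.diagonal lam * (Fmat d)ᴴ)
    (hunit : ∀ k, ∑ j, ‖M j k‖ ^ 2 = 1)
    (hframe : ∀ j, lam j ≠ 0) :
    ∃ Mt : Matrix (Fin d) (Fin d) ℂ,
      (∃ ν, Mt = circulantRow ν) ∧
      (∀ k, ∑ j, ‖Mt j k‖ ^ 2 = 1) ∧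
      LinearIndependent ℂ (fun k => Mtᵀ k) ∧
      ∀ s t, ‖(Mᴴ * Mt) s t‖ ^ 2 = 1 / (∑ j, 1 / ‖lam j‖ ^ 2) :=
  exists_unbiased_circulant_partner_general d M lam hdiag hframe
end

section
/- Let φ ∈ C^d be a unit vector such that the vector of squared amplitudes satisfies Σ_j |⟨j,φ⟩|² e_j = F†((1/√d)e_0 + (1/√(d(d+1))) Σ_{j=1}^{d−1} e^{iα_j} e_j) with α_{d−j} = −α_j. Then the probabilities p_j = |⟨j,φ⟩|² satisfy Σ_{j=0}^{d−1} p_j p_{(j+k) mod d} = (1 + δ_{k,0})/(d+1) for all k = 0,...,d−1. -/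
open Matrix

/-- If a unit vector `φ ∈ ℂ^d` has squared amplitudes of the form
`F†((1/√d)e₀ + (1/√(d(d+1))) ∑_{j≠0} e^{iα_j} e_j)` with `α_{d−j} = −α_j`, then the
probabilities `p_j = |⟨j,φ⟩|²` satisfy `∑_j p_j p_{j+k} = (1+δ_{k,0})/(d+1)`. -/
theorem amplitude_form_autocorrelation (d : ℕ) [NeZero d] (φ : Fin d → ℂ)
    (hunit : ∑ j, ‖φ j‖ ^ 2 = 1) (α : Fin d → ℝ)
    (hα : ∀ j : Fin d, j ≠ 0 → α (-j) = -α j)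
    (hamp : (fun j : Fin d => (‖φ j‖ ^ 2 : ℂ)) =
      (Fmat d)ᴴ *ᵥ fun j : Fin d =>
        if j = 0 then (1 / (Real.sqrt d : ℂ))
        else Complex.exp (Complex.I * α j) / (Real.sqrt (d * (d + 1)) : ℂ)) :
    ∀ k : Fin d, ∑ j : Fin d, ‖φ j‖ ^ 2 * ‖φ (j + k)‖ ^ 2 =
      (1 + if k = 0 then 1 else 0) / (d + 1) := by
  intro k
  have hd0 : d ≠ 0 := NeZero.ne d
  have hdR : (0:ℝ) ≤ (d:ℝ) := Nat.cast_nonneg d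
  have hdC : (d:ℂ) ≠ 0 := Nat.cast_ne_zero.mpr hd0
  have hd1C : (d:ℂ) + 1 ≠ 0 := by
    have : ((d+1 : ℕ) : ℂ) ≠ 0 := Nat.cast_ne_zero.mpr (Nat.succ_ne_zero d)
    push_cast at this; exact this
  set ξ : ℂ := (Complex.exp (2 * Real.pi * Complex.I / d))⁻¹ with hξdef
  have hξprim : IsPrimitiveRoot ξ d := (Complex.isPrimitiveRoot_exp d hd0).inv
  have hξd : ξ ^ d = 1 := hξprim.pow_eq_one
  have hmod : ∀ a : ℕ, ξ ^ (a % d) = ξ ^ a := by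
    intro a
    conv_rhs => rw [← Nat.mod_add_div a d]
    rw [pow_add, pow_mul, hξd, one_pow, mul_one]
  have orth : ∀ t : ℕ, ∑ j : Fin d, ξ ^ (j.val * t) = if d ∣ t then (d:ℂ) else 0 := by
    intro t
    have h1 : ∀ j : Fin d, ξ ^ (j.val * t) = (ξ ^ t) ^ j.val := fun j => by
      rw [← pow_mul, Nat.mul_comm]
    simp only [h1]
    rw [Fin.sum_univ_eq_sum_range (fun i => (ξ ^ t) ^ i)]
    by_cases hdvd : d ∣ t
    · have : ξ ^ t = 1 := (hξprim.pow_eq_one_iff_dvd t).mpr hdvd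
      simp [this, hdvd]
    · have hne : ξ ^ t ≠ 1 := fun h => hdvd ((hξprim.pow_eq_one_iff_dvd t).mp h)
      rw [geom_sum_eq hne d, ← pow_mul, Nat.mul_comm, pow_mul, hξd, one_pow]
      simp [hdvd]
  have hs : (Real.sqrt d : ℂ) * (Real.sqrt d : ℂ) = (d : ℂ) := by
    rw [← Complex.ofReal_mul, Real.mul_self_sqrt hdR]; norm_cast
  have hs2 : (Real.sqrt ((d:ℝ)*((d:ℝ)+1)) : ℂ) * (Real.sqrt ((d:ℝ)*((d:ℝ)+1)) : ℂ)
      = (d : ℂ) * ((d:ℂ)+1) := by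
    rw [← Complex.ofReal_mul, Real.mul_self_sqrt (by positivity)]
    push_cast; ring
  -- conjugated Fourier entries
  have hFstar : ∀ m j : Fin d, star (Fmat d m j) =
      ξ ^ (m.val * j.val) / (Real.sqrt d : ℂ) := by
    intro m j
    have hpow : ξ ^ (m.val * j.val) =
        Complex.exp (-(2 * Real.pi * Complex.I * m.val * j.val / d)) := by
      rw [hξdef, ← Complex.exp_neg, ← Complex.exp_nat_mul]
      congr 1
      push_cast; ring
    simp only [Fmat, hpow, star_div₀, Complex.star_def, ← Complex.exp_conj]
    congr 2
    · simp only [map_div₀, _root_.map_mul, map_ofNat, Complex.conj_I, Complex.conj_ofReal,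
        Complex.conj_natCast]
      ring
    · rw [Complex.conj_ofReal]
  -- the coefficient vector
  set c : Fin d → ℂ := fun j : Fin d =>
    if j = 0 then (1 / (Real.sqrt d : ℂ))
    else Complex.exp (Complex.I * α j) / (Real.sqrt (d * (d + 1)) : ℂ) with hcdef
  have hp : ∀ j : Fin d, ((‖φ j‖ : ℂ) ^ 2) =
      ∑ m : Fin d, ξ ^ (m.val * j.val) / (Real.sqrt d : ℂ) * c m := by
    intro j
    have h := congrFun hamp j
    simp only [Matrix.mulVec, dotProduct, Matrix.conjTranspose_apply] at h
    rw [h]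
    exact Finset.sum_congr rfl fun m _ => by rw [hFstar]
  -- divisibility criterion
  have hdvdiff : ∀ m n : Fin d, (d ∣ m.val + n.val) ↔ n = -m := by
    intro m n
    have h1 : n = -m ↔ m + n = 0 := by rw [eq_comm, neg_eq_iff_add_eq_zero]
    rw [h1, Fin.ext_iff]
    simp only [Fin.add_def, Fin.val_zero]
    exact Nat.dvd_iff_mod_eq_zero
  have hsne : (Real.sqrt d : ℂ) ≠ 0 := fun h => hdC (by rw [← hs, h, mul_zero])
  -- inner sum over j for fixed m, n
  have inner : ∀ m n : Fin d,
      (∑ j : Fin d, (ξ ^ (m.val * j.val) / (Real.sqrt d : ℂ) * c m) *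
        (ξ ^ (n.val * (j + k).val) / (Real.sqrt d : ℂ) * c n)) =
      if n = -m then c m * c n * ξ ^ (n.val * k.val) else 0 := by
    intro m n
    have e1 : ∀ j : Fin d, (ξ ^ (m.val * j.val) / (Real.sqrt d : ℂ) * c m) *
        (ξ ^ (n.val * (j + k).val) / (Real.sqrt d : ℂ) * c n)
        = c m * c n / (d:ℂ) * ξ ^ (n.val * k.val) * ξ ^ (j.val * (m.val + n.val)) := by
      intro j
      have e2 : ξ ^ (n.val * (j + k).val) = ξ ^ (n.val * k.val) * ξ ^ (j.val * n.val) := by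
        have hv : (j + k).val = (j.val + k.val) % d := by rw [Fin.add_def]
        calc ξ ^ (n.val * (j + k).val) = (ξ ^ ((j.val + k.val) % d)) ^ n.val := by
              rw [hv, pow_mul']
          _ = (ξ ^ (j.val + k.val)) ^ n.val := by rw [hmod]
          _ = ξ ^ (n.val * k.val) * ξ ^ (j.val * n.val) := by
              rw [← pow_mul, ← pow_add]; congr 1; ring
      have e3 : ξ ^ (j.val * (m.val + n.val)) = ξ ^ (m.val * j.val) * ξ ^ (j.val * n.val) := by
        rw [← pow_add]; congr 1; ring
      rw [e2, e3, ← hs]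
      ring
    simp_rw [e1]
    rw [← Finset.mul_sum, orth (m.val + n.val)]
    by_cases hc : n = -m
    · rw [if_pos ((hdvdiff m n).mpr hc), if_pos hc]
      field_simp
    · rw [if_neg (fun h => hc ((hdvdiff m n).mp h)), if_neg hc, mul_zero]
  -- k = 0 criterion
  have hk0 : (d ∣ k.val) ↔ k = 0 := by
    constructor
    · intro h
      have := Nat.eq_zero_of_dvd_of_lt h
      rcases Nat.eq_zero_or_pos k.val with h0 | hpos
      · exact Fin.ext (by simpa using h0)
      · exact absurd (Nat.le_of_dvd hpos h) (not_le.mpr k.isLt)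
    · intro h; rw [h]; simp
  -- the main computation over ℂ
  have key : (∑ j : Fin d, ((‖φ j‖ : ℂ) ^ 2 * (‖φ (j + k)‖ : ℂ) ^ 2)) =
      1/(d:ℂ) + (1/((d:ℂ) * ((d:ℂ) + 1))) * ((if k = 0 then (d:ℂ) else 0) - 1) := by
    calc (∑ j : Fin d, ((‖φ j‖ : ℂ) ^ 2 * (‖φ (j + k)‖ : ℂ) ^ 2))
        = ∑ j : Fin d, (∑ m : Fin d, ξ ^ (m.val * j.val) / (Real.sqrt d : ℂ) * c m) *
            (∑ n : Fin d, ξ ^ (n.val * (j + k).val) / (Real.sqrt d : ℂ) * c n) := by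
          exact Finset.sum_congr rfl fun j _ => by rw [hp j, hp (j + k)]
      _ = ∑ m : Fin d, ∑ n : Fin d, ∑ j : Fin d,
            (ξ ^ (m.val * j.val) / (Real.sqrt d : ℂ) * c m) *
            (ξ ^ (n.val * (j + k).val) / (Real.sqrt d : ℂ) * c n) := by
          simp_rw [Finset.sum_mul_sum]
          rw [Finset.sum_comm]
          exact Finset.sum_congr rfl fun m _ => Finset.sum_comm
      _ = ∑ m : Fin d, ∑ n : Fin d,
            (if n = -m then c m * c n * ξ ^ (n.val * k.val) else 0) :=
          Finset.sum_congr rfl fun m _ => Finset.sum_congr rfl fun n _ => inner m n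
      _ = ∑ m : Fin d, c m * c (-m) * ξ ^ ((-m).val * k.val) := by
          refine Finset.sum_congr rfl fun m _ => ?_
          rw [Finset.sum_ite_eq' Finset.univ (-m)
            (fun n => c m * c n * ξ ^ (n.val * k.val))]
          simp
      _ = ∑ m : Fin d, c (-m) * c m * ξ ^ (m.val * k.val) := by
          refine Fintype.sum_equiv (Equiv.neg (Fin d)) _ _ fun x => ?_
          simp only [Equiv.neg_apply, neg_neg]
      _ = 1/(d:ℂ) + (1/((d:ℂ) * ((d:ℂ) + 1))) * ((if k = 0 then (d:ℂ) else 0) - 1) := by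
          rw [Finset.sum_eq_sum_sdiff_singleton_add (Finset.mem_univ (0 : Fin d))]
          have h0 : c (-0) * c 0 * ξ ^ ((0 : Fin d).val * k.val) = 1/(d:ℂ) := by
            simp only [neg_zero, Fin.val_zero, Nat.zero_mul, pow_zero, mul_one]
            simp only [hcdef, if_pos rfl]
            rw [div_mul_div_comm, one_mul, hs]
          have h1 : ∀ m ∈ Finset.univ \ {(0 : Fin d)},
              c (-m) * c m * ξ ^ (m.val * k.val)
              = (1/((d:ℂ) * ((d:ℂ) + 1))) * ξ ^ (m.val * k.val) := by
            intro m hm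
            have hm0 : m ≠ 0 := by simpa using hm
            have hmn0 : -m ≠ 0 := fun h => hm0 (by simpa [neg_eq_zero] using h)
            have : c (-m) * c m = 1/((d:ℂ) * ((d:ℂ) + 1)) := by
              simp only [hcdef, if_neg hm0, if_neg hmn0]
              rw [div_mul_div_comm, hs2, ← Complex.exp_add, hα m hm0]
              push_cast
              rw [show Complex.I * -(α m : ℂ) + Complex.I * (α m : ℂ) = 0 by ring,
                Complex.exp_zero]
            rw [this]
          rw [Finset.sum_congr rfl h1, ← Finset.mul_sum, h0]
          have h2 : ∑ m ∈ Finset.univ \ {(0 : Fin d)}, ξ ^ (m.val * k.val)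
              = (if k = 0 then (d:ℂ) else 0) - 1 := by
            have h3 := Finset.sum_eq_sum_sdiff_singleton_add (Finset.mem_univ (0 : Fin d))
              (fun m : Fin d => ξ ^ (m.val * k.val))
            rw [orth k.val] at h3
            simp only [Fin.val_zero, Nat.zero_mul, pow_zero] at h3
            simp only [hk0] at h3
            linear_combination -h3
          rw [h2]
          ring
  -- transfer to ℝ
  apply Complex.ofReal_injective
  push_cast [apply_ite (Complex.ofReal : ℝ → ℂ)]
  rw [key]
  by_cases hk : k = 0
  · rw [if_pos hk, if_pos hk]
    field_simp
    try ring
  · rw [if_neg hk, if_neg hk]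
    field_simp
    try ring
end
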